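/- Let G be a regular paratopological group with topology τ such that the associated topological group G* = (G, τ ∨ τ⁻¹) is ω-narrow and simply sm-factorizable. Then G is simply sm-factorizable and ω-narrow. -/

import Mathlib

open Topology TopologicalSpace Pointwise Function Set

def IsCozero {X : Type*} [TopologicalSpace X] (U : Set X) : Prop :=
  ∃ f : X → ℝ, Continuous f ∧ U = f ⁻¹' {x : ℝ | x ≠ 0}

/-- A topological group is simply sm-factorizable if every cozero set is saturated with
respect to some continuous surjective homomorphism onto a separable metrizable topological group. -/
def SimplySMFactorizable (G : Type*) [Group G] [TopologicalSpace G] : Prop :=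
  ∀ U : Set G, IsCozero U →
    ∃ (H : Type) (gH : Group H) (tH : TopologicalSpace H),
      letI := gH
      letI := tH
      IsTopologicalGroup H ∧ SeparableSpace H ∧ MetrizableSpace H ∧
        ∃ π : G →* H, Continuous π ∧ Surjective π ∧ ⇑π ⁻¹' (⇑π '' U) = U

/-- A paratopological group is simply sm-factorizable if every cozero set is saturated with
respect to some continuous surjective homomorphism onto a separable metrizable paratopological group. -/
def SimplySMFactorizablePara (G : Type*) [Group G] [TopologicalSpace G] : Prop :=
  ∀ U : Set G, IsCozero U →
    ∃ (H : Type) (gH : Group H) (tH : TopologicalSpace H),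
      letI := gH
      letI := tH
      ContinuousMul H ∧ SeparableSpace H ∧ MetrizableSpace H ∧
        ∃ π : G →* H, Continuous π ∧ Surjective π ∧ ⇑π ⁻¹' (⇑π '' U) = U

/-- The conjugate topology τ⁻¹ = {U⁻¹ : U ∈ τ}: the topology induced by the inversion map. -/
def conjTop (G : Type*) [Group G] (τ : TopologicalSpace G) : TopologicalSpace G :=
  TopologicalSpace.induced (fun x : G => x⁻¹) τ

/-- A (para)topological group is ω-narrow if each neighborhood of the identity translates
over a countable set to cover the group. -/
def OmegaNarrow (G : Type*) [Group G] [TopologicalSpace G] : Prop :=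
  ∀ U ∈ 𝓝 (1 : G), ∃ A : Set G, A.Countable ∧ A * U = Set.univ ∧ U * A = Set.univ

/-!
Since `τ` is coarser than `τ*`, ω-narrowness passes from `G*` to `G`. For a cozero set `U`, take a
continuous homomorphism `φ` of `G*` onto a separable metrizable group saturating `U`; a countable
base of its target at `1` yields countably many `τ`-neighbourhoods `V` of `1` such that
`x ∈ V ∩ V⁻¹` for all of them forces `φ x = 1`. Using ω-narrowness of `G*` and regularity of `G`,
close these off to a countable family `Γ` of `τ`-neighbourhoods of `1` that is a base at `1` of a
coarser paratopological group topology, which is regular and second countable. Its T₀-quotient is a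
separable metrizable paratopological group, and two points it identifies satisfy `x⁻¹ * y ∈ A ∩ A⁻¹`
for every `A ∈ Γ`, hence have the same image under `φ`; so `U` is saturated for the quotient map.
-/

open Filter

theorem Set.exists_countable_superset_forall_subset {α : Type*} {s P : Set α} (hs : s.Countable)
    (hsP : s ⊆ P) (r : α → α → Set α) (hr : ∀ a ∈ P, ∀ b ∈ P, (r a b).Countable)
    (hrP : ∀ a ∈ P, ∀ b ∈ P, r a b ⊆ P) :
    ∃ t, s ⊆ t ∧ t ⊆ P ∧ t.Countable ∧ ∀ a ∈ t, ∀ b ∈ t, r a b ⊆ t := by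
  let T : ℕ → Set α := fun n => (fun u => u ∪ ⋃ a ∈ u, ⋃ b ∈ u, r a b)^[n] s
  have hT (n : ℕ) : T (n + 1) = T n ∪ ⋃ a ∈ T n, ⋃ b ∈ T n, r a b :=
    Function.iterate_succ_apply' _ _ _
  have hTmono : Monotone T := monotone_nat_of_le_succ fun n => hT n ▸ subset_union_left
  have hTP (n : ℕ) : T n ⊆ P ∧ (T n).Countable := by
    induction n with
    | zero => exact ⟨hsP, hs⟩
    | succ n ih =>
      rw [hT]
      exact ⟨union_subset ih.1 <| iUnion₂_subset fun a ha => iUnion₂_subset fun b hb =>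
          hrP a (ih.1 ha) b (ih.1 hb),
        ih.2.union <| ih.2.biUnion fun a ha => ih.2.biUnion fun b hb => hr a (ih.1 ha) b (ih.1 hb)⟩
  refine ⟨⋃ n, T n, subset_iUnion T 0, iUnion_subset fun n => (hTP n).1,
    countable_iUnion fun n => (hTP n).2, ?_⟩
  simp only [mem_iUnion]
  rintro a ⟨m, ha⟩ b ⟨n, hb⟩ c hc
  refine mem_iUnion.2 ⟨max m n + 1, ?_⟩
  rw [hT]
  exact Or.inr <| mem_biUnion (hTmono (le_max_left m n) ha) <|
    mem_biUnion (hTmono (le_max_right m n) hb) hc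

theorem Set.preimage_image_eq_of_factors {α β γ : Type*} {f : α → β} {g : α → γ} {U : Set α}
    (hU : g ⁻¹' (g '' U) = U) (h : ∀ x y, f x = f y → g x = g y) : f ⁻¹' (f '' U) = U :=
  Subset.antisymm (fun x ⟨u, hu, hux⟩ => hU ▸ ⟨u, hu, h u x hux⟩) (subset_preimage_image f U)

section SeparationQuotient

variable {G : Type*} [Group G] [TopologicalSpace G] [ContinuousMul G]

theorem Inseparable.inv_of_continuousMul {x y : G} (h : Inseparable x y) :
    Inseparable x⁻¹ y⁻¹ := by
  have h' : Inseparable (x⁻¹ * x * y⁻¹) (x⁻¹ * y * y⁻¹) :=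
    h.map ((continuous_mul_const y⁻¹).comp (continuous_const_mul x⁻¹))
  simpa using h'.symm

theorem Inseparable.inv_mul_mem_of_mem_nhds_one {x y : G} (h : Inseparable x y) {U : Set G}
    (hU : U ∈ 𝓝 (1 : G)) : x⁻¹ * y ∈ U := by
  have h' : Inseparable (x⁻¹ * x) (x⁻¹ * y) := h.map (continuous_const_mul _)
  rw [inv_mul_cancel] at h'
  exact mem_of_mem_nhds (h'.nhds_eq ▸ hU)

namespace SeparationQuotient

/-- `SeparationQuotient.instGroup` assumes `IsTopologicalGroup`, but continuity of multiplication
already makes inversion compatible with inseparability. -/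
noncomputable abbrev groupOfContinuousMul : Group (SeparationQuotient G) :=
  { instMonoid with
    inv := lift (fun x => mk x⁻¹) fun _ _ h => mk_eq_mk.2 h.inv_of_continuousMul
    inv_mul_cancel := surjective_mk.forall.2 fun x => by
      change mk (x⁻¹ * x) = mk 1
      rw [inv_mul_cancel] }

end SeparationQuotient

theorem exists_separable_metrizable_quotient [RegularSpace G] [SecondCountableTopology G] :
    ∃ (H : Type) (gH : Group H) (tH : TopologicalSpace H),
      letI := gH
      letI := tH
      ContinuousMul H ∧ SeparableSpace H ∧ MetrizableSpace H ∧
        ∃ π : G →* H, Continuous π ∧ Surjective π ∧ ∀ x y, π x = π y → Inseparable x y := by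
  let := SeparationQuotient.groupOfContinuousMul (G := G)
  have : SecondCountableTopology (SeparationQuotient G) :=
    SeparationQuotient.isQuotientMap_mk.secondCountableTopology SeparationQuotient.isOpenMap_mk
  obtain ⟨f, hf⟩ := exists_embedding_l_infty (SeparationQuotient G)
  have : Small.{0} (SeparationQuotient G) := small_of_injective hf.injective
  let e : SeparationQuotient G ≃ₜ Shrink.{0} (SeparationQuotient G) := Shrink.homeomorph _
  let mk : G →* SeparationQuotient G := ⟨⟨SeparationQuotient.mk, rfl⟩, fun _ _ => rfl⟩
  refine ⟨Shrink.{0} (SeparationQuotient G), inferInstance, inferInstance,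
    Topology.IsInducing.continuousMul Shrink.mulEquiv e.symm.isInducing,
    e.surjective.denseRange.separableSpace e.continuous, e.symm.isEmbedding.metrizableSpace,
    (Shrink.mulEquiv (α := SeparationQuotient G)).symm.toMonoidHom.comp mk,
    e.continuous.comp SeparationQuotient.continuous_mk,
    e.surjective.comp SeparationQuotient.surjective_mk,
    fun x y hxy => SeparationQuotient.mk_eq_mk.1 (e.injective hxy)⟩

end SeparationQuotient

section Criteria

variable {G : Type*} [Group G] [TopologicalSpace G] [ContinuousMul G]

theorem exists_mem_nhds_one_mul_subset_closure_subset [RegularSpace G] {A : Set G}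
    (hA : A ∈ 𝓝 (1 : G)) : ∃ B ∈ 𝓝 (1 : G), B * B ⊆ A ∧ closure B ⊆ A := by
  obtain ⟨V, hV, hV1, hVA⟩ := exists_open_nhds_one_mul_subset hA
  obtain ⟨C, hC, hCc, hCA⟩ := exists_mem_nhds_isClosed_subset hA
  exact ⟨V ∩ C, inter_mem (hV.mem_nhds hV1) hC,
    (mul_subset_mul inter_subset_left inter_subset_left).trans hVA,
    (closure_mono inter_subset_right).trans (hCc.closure_subset.trans hCA)⟩

theorem regularSpace_of_exists_closure_subset
    (h : ∀ U ∈ 𝓝 (1 : G), ∃ V ∈ 𝓝 (1 : G), closure V ⊆ U) : RegularSpace G := by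
  refine .of_exists_mem_nhds_isClosed_subset fun x U hU => ?_
  obtain ⟨V, hV, hVU⟩ := h (x⁻¹ • U) (by simpa using (smul_mem_nhds_smul_iff x⁻¹).2 hU)
  refine ⟨x • closure V, ?_, isClosed_closure.smul x, ?_⟩
  · simpa using (smul_mem_nhds_smul_iff x).2 (mem_of_superset hV subset_closure)
  · simpa [Set.smul_set_subset_iff_subset_inv_smul_set] using hVU

theorem secondCountableTopology_of_mul_inter_inv_eq_univ [(𝓝 (1 : G)).IsCountablyGenerated]
    {D : Set G} (hD : D.Countable) (hcover : ∀ U ∈ 𝓝 (1 : G), D * (U ∩ U⁻¹) = univ) :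
    SecondCountableTopology G := by
  obtain ⟨b, hb⟩ := (𝓝 (1 : G)).exists_antitone_basis
  have hbasis : IsTopologicalBasis (image2 (fun d n => interior (d • b n)) D univ) := by
    refine isTopologicalBasis_of_isOpen_of_nhds
      (by rintro _ ⟨d, -, n, -, rfl⟩; exact isOpen_interior) fun x u hxu hu => ?_
    have hu' : x⁻¹ • u ∈ 𝓝 (1 : G) := by
      simpa using (smul_mem_nhds_smul_iff x⁻¹).2 (hu.mem_nhds hxu)
    obtain ⟨V, hV, hV1, hVu⟩ := exists_open_nhds_one_mul_subset hu'
    obtain ⟨n, -, hnV⟩ := hb.toHasBasis.mem_iff.1 (hV.mem_nhds hV1)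
    obtain ⟨W, hW, hW1, hWn⟩ := exists_open_nhds_one_mul_subset (hb.mem n)
    have hWV : W ⊆ V := (subset_mul_left W hW1).trans (hWn.trans hnV)
    have hx : x ∈ D * (W ∩ W⁻¹) := by rw [hcover W (hW.mem_nhds hW1)]; trivial
    obtain ⟨d, hd, s, ⟨hsW, hsW'⟩, rfl⟩ := hx
    refine ⟨interior (d • b n), ⟨d, hd, n, trivial, rfl⟩, ?_, interior_subset.trans ?_⟩
    · have hxW : (d * s) • W ∈ 𝓝 ((d * s) • (1 : G)) :=
        (smul_mem_nhds_smul_iff _).2 (hW.mem_nhds hW1)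
      rw [smul_eq_mul, mul_one] at hxW
      refine mem_interior_iff_mem_nhds.2 (mem_of_superset hxW ?_)
      rintro _ ⟨w, hw, rfl⟩
      exact ⟨s * w, hWn (mul_mem_mul hsW hw), by simp [mul_assoc]⟩
    · rintro _ ⟨c, hc, rfl⟩
      have hsc : s⁻¹ * c ∈ (d * s)⁻¹ • u := hVu (mul_mem_mul (hWV hsW') (hnV hc))
      rw [mem_inv_smul_set_iff, smul_eq_mul] at hsc
      simpa [mul_assoc] using hsc
  exact hbasis.secondCountableTopology (hD.image2 countable_univ _)

end Criteria

namespace Filter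

variable {G : Type*} [Group G]

def translationTopology (F : Filter G) : TopologicalSpace G :=
  .mkOfNhds fun x => map (x * ·) F

structure IsParatopologicalNhdsOne (F : Filter G) : Prop where
  pure_one_le : pure 1 ≤ F
  tendsto_mul : Tendsto (fun p : G × G => p.1 * p.2) (F ×ˢ F) F
  tendsto_conj : ∀ g : G, Tendsto (fun x => g * x * g⁻¹) F F

namespace IsParatopologicalNhdsOne

variable {F : Filter G}

theorem nhds_eq (hF : F.IsParatopologicalNhdsOne) (x : G) :
    @nhds G F.translationTopology x = map (x * ·) F := by
  refine TopologicalSpace.nhds_mkOfNhds _ x (fun y => ?_) fun y s hs => ?_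
  · calc pure y = map (y * ·) (pure 1) := by simp
      _ ≤ _ := map_mono hF.pure_one_le
  · rw [eventually_map]
    filter_upwards [(hF.tendsto_mul.eventually (p := (y * ·) ⁻¹' s) hs).curry] with u hu
    simp only [mem_map, mul_assoc]
    exact hu

theorem nhds_one (hF : F.IsParatopologicalNhdsOne) : @nhds G F.translationTopology 1 = F := by
  simp [hF.nhds_eq]

theorem continuousMul (hF : F.IsParatopologicalNhdsOne) :
    @ContinuousMul G F.translationTopology _ := by
  let := F.translationTopology
  refine .of_nhds_one (by rw [hF.nhds_one]; exact hF.tendsto_mul) (fun x => by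
    rw [hF.nhds_eq, hF.nhds_one]) fun x => ?_
  rw [hF.nhds_eq, hF.nhds_one]
  refine le_antisymm ((tendsto_map.comp (hF.tendsto_conj x)).congr fun y => ?_)
    ((tendsto_map.comp (hF.tendsto_conj x⁻¹)).congr fun y => ?_) <;> simp [mul_assoc]

theorem regularSpace (hF : F.IsParatopologicalNhdsOne)
    (h : ∀ U ∈ F, ∃ V ∈ F, ∀ y, (∀ W ∈ F, (y • W ∩ V).Nonempty) → y ∈ U) :
    @RegularSpace G F.translationTopology := by
  let := F.translationTopology
  have := hF.continuousMul
  refine regularSpace_of_exists_closure_subset fun U hU => ?_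
  rw [hF.nhds_one] at hU ⊢
  obtain ⟨V, hV, hVU⟩ := h U hU
  refine ⟨V, hV, fun y hy => hVU y fun W hW => mem_closure_iff_nhds.1 hy _ ?_⟩
  rw [hF.nhds_eq]
  exact mem_map.2 (mem_of_superset hW fun w hw => smul_mem_smul_set hw)

theorem secondCountableTopology (hF : F.IsParatopologicalNhdsOne) [F.IsCountablyGenerated]
    {D : Set G} (hD : D.Countable) (hcover : ∀ U ∈ F, D * (U ∩ U⁻¹) = univ) :
    @SecondCountableTopology G F.translationTopology := by
  let := F.translationTopology
  have := hF.continuousMul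
  have : (𝓝 (1 : G)).IsCountablyGenerated := by rw [hF.nhds_one]; infer_instance
  exact secondCountableTopology_of_mul_inter_inv_eq_univ hD (by rwa [hF.nhds_one])

end IsParatopologicalNhdsOne

end Filter

section NarrowBase

variable {G : Type*} [Group G] [TopologicalSpace G]

/-- Conditions under which `⨅ A ∈ Γ, 𝓟 A` is the neighbourhood filter of `1` of a regular, second
countable paratopological group topology coarser than the given one. Conjugation and separation are
only required at the countably many `d ∈ D`, so that a countable `Γ` can meet them; the covering
conditions propagate them to all points. -/
structure IsNarrowBase (Γ : Set (Set G)) (D : Set G) : Prop where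
  countable : Γ.Countable
  countable_points : D.Countable
  nonempty : Γ.Nonempty
  mem_nhds : ∀ A ∈ Γ, A ∈ 𝓝 (1 : G)
  inter_mem : ∀ A ∈ Γ, ∀ B ∈ Γ, A ∩ B ∈ Γ
  exists_mul_subset : ∀ A ∈ Γ, ∃ B ∈ Γ, B * B ⊆ A
  exists_closure_subset : ∀ A ∈ Γ, ∃ B ∈ Γ, closure B ⊆ A
  exists_conj_subset : ∀ A ∈ Γ, ∀ d ∈ D, ∃ B ∈ Γ, ∀ b ∈ B, d * b * d⁻¹ ∈ A
  exists_disjoint : ∀ A ∈ Γ, ∀ d ∈ D, d ∉ closure (A * A) → ∃ C ∈ Γ, Disjoint (d • C) (A * A)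
  mul_inter_inv_eq_univ : ∀ A ∈ Γ, D * (A ∩ A⁻¹) = univ
  inter_inv_mul_eq_univ : ∀ A ∈ Γ, (A ∩ A⁻¹) * D = univ

namespace IsNarrowBase

variable {Γ : Set (Set G)} {D : Set G}

theorem hasBasis (h : IsNarrowBase Γ D) : (⨅ A ∈ Γ, 𝓟 A).HasBasis (· ∈ Γ) id :=
  hasBasis_biInf_principal (fun A hA B hB => ⟨A ∩ B, h.inter_mem A hA B hB,
    inter_subset_left, inter_subset_right⟩) h.nonempty

theorem one_mem (h : IsNarrowBase Γ D) {A : Set G} (hA : A ∈ Γ) : (1 : G) ∈ A :=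
  mem_of_mem_nhds (h.mem_nhds A hA)

theorem subset_of_mul_subset (h : IsNarrowBase Γ D) {A B : Set G} (hB : B ∈ Γ)
    (hBA : B * B ⊆ A) : B ⊆ A :=
  (subset_mul_left B (h.one_mem hB)).trans hBA

theorem exists_conj_subset_of_forall (h : IsNarrowBase Γ D) (g : G) {A : Set G} (hA : A ∈ Γ) :
    ∃ B ∈ Γ, ∀ b ∈ B, g * b * g⁻¹ ∈ A := by
  obtain ⟨A₁, hA₁, hA₁A⟩ := h.exists_mul_subset A hA
  obtain ⟨A₂, hA₂, hA₂A₁⟩ := h.exists_mul_subset A₁ hA₁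
  have hg : g ∈ (A₂ ∩ A₂⁻¹) * D := by rw [h.inter_inv_mul_eq_univ A₂ hA₂]; trivial
  obtain ⟨s, ⟨hs, hs'⟩, d, hd, rfl⟩ := hg
  obtain ⟨B, hB, hBA₂⟩ := h.exists_conj_subset A₂ hA₂ d hd
  refine ⟨B, hB, fun b hb => ?_⟩
  have hmem : s * (d * b * d⁻¹) * s⁻¹ ∈ A :=
    hA₁A (mul_mem_mul (hA₂A₁ (mul_mem_mul hs (hBA₂ b hb)))
      (h.subset_of_mul_subset hA₂ hA₂A₁ hs'))
  simpa [mul_assoc] using hmem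

theorem isParatopologicalNhdsOne (h : IsNarrowBase Γ D) :
    (⨅ A ∈ Γ, 𝓟 A).IsParatopologicalNhdsOne where
  pure_one_le := h.hasBasis.ge_iff.2 fun A hA => h.one_mem hA
  tendsto_mul := (h.hasBasis.prod_self.tendsto_iff h.hasBasis).2 fun A hA => by
    obtain ⟨B, hB, hBA⟩ := h.exists_mul_subset A hA
    exact ⟨B, hB, fun p hp => hBA (mul_mem_mul hp.1 hp.2)⟩
  tendsto_conj g := (h.hasBasis.tendsto_iff h.hasBasis).2 fun A hA =>
    h.exists_conj_subset_of_forall g hA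

/-- The hypothesis on `y` says that `y` lies in the closure of `B` for the coarser topology. -/
theorem mem_of_forall_smul_inter_nonempty (h : IsNarrowBase Γ D) {A : Set G} (hA : A ∈ Γ) :
    ∃ B ∈ Γ, ∀ y, (∀ C ∈ Γ, (y • C ∩ B).Nonempty) → y ∈ A := by
  obtain ⟨A₀, hA₀, hA₀A⟩ := h.exists_mul_subset A hA
  obtain ⟨A₁, hA₁, hA₁A₀⟩ := h.exists_closure_subset A₀ hA₀
  obtain ⟨B, hB, hBA₁⟩ := h.exists_mul_subset A₁ hA₁
  refine ⟨B, hB, fun y hy => ?_⟩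
  have hy' : y ∈ (B ∩ B⁻¹) * D := by rw [h.inter_inv_mul_eq_univ B hB]; trivial
  obtain ⟨s, ⟨hs, hs'⟩, d, hd, rfl⟩ := hy'
  have hdB : d ∈ closure (B * B) := by
    by_contra hdB
    obtain ⟨C, hC, hdisj⟩ := h.exists_disjoint B hB d hd hdB
    obtain ⟨_, ⟨c, hc, rfl⟩, hb⟩ := hy C hC
    exact hdisj.ne_of_mem (smul_mem_smul_set hc) (mul_mem_mul hs' hb) (by simp [mul_assoc])
  have hBA₀ : B ⊆ A₀ := (subset_mul_left B (h.one_mem hB)).trans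
    (hBA₁.trans (subset_closure.trans hA₁A₀))
  exact hA₀A (mul_mem_mul (hBA₀ hs) (hA₁A₀ (closure_mono hBA₁ hdB)))

theorem regularSpace (h : IsNarrowBase Γ D) :
    @RegularSpace G (⨅ A ∈ Γ, 𝓟 A).translationTopology :=
  h.isParatopologicalNhdsOne.regularSpace fun U hU => by
    obtain ⟨A, hA, hAU⟩ := h.hasBasis.mem_iff.1 hU
    obtain ⟨B, hB, hBA⟩ := h.mem_of_forall_smul_inter_nonempty hA
    exact ⟨B, h.hasBasis.mem_of_mem hB,
      fun y hy => hAU (hBA y fun C hC => hy C (h.hasBasis.mem_of_mem hC))⟩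

theorem secondCountableTopology (h : IsNarrowBase Γ D) :
    @SecondCountableTopology G (⨅ A ∈ Γ, 𝓟 A).translationTopology :=
  have := isCountablyGenerated_biInf_principal h.countable
  h.isParatopologicalNhdsOne.secondCountableTopology h.countable_points fun U hU => by
    obtain ⟨A, hA, hAU⟩ := h.hasBasis.mem_iff.1 hU
    exact eq_univ_of_subset (mul_subset_mul_left (inter_subset_inter hAU (inv_subset_inv.2 hAU)))
      (h.mul_inter_inv_eq_univ A hA)

theorem le_translationTopology [ContinuousMul G] (h : IsNarrowBase Γ D) :
    ‹TopologicalSpace G› ≤ (⨅ A ∈ Γ, 𝓟 A).translationTopology := by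
  refine (le_iff_nhds _ _).2 fun x => ?_
  rw [h.isParatopologicalNhdsOne.nhds_eq]
  calc 𝓝 x = map (x * ·) (𝓝 1) := by simpa using ((Homeomorph.mulLeft x).map_nhds_eq 1).symm
    _ ≤ _ := map_mono (h.hasBasis.ge_iff.2 h.mem_nhds)

theorem exists_quotient [ContinuousMul G] (h : IsNarrowBase Γ D) :
    ∃ (H : Type) (gH : Group H) (tH : TopologicalSpace H),
      letI := gH
      letI := tH
      ContinuousMul H ∧ SeparableSpace H ∧ MetrizableSpace H ∧
        ∃ π : G →* H, Continuous π ∧ Surjective π ∧ ∀ x y, π x = π y → ∀ A ∈ Γ, x⁻¹ * y ∈ A := by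
  have hF := h.isParatopologicalNhdsOne
  obtain ⟨H, gH, tH, hmul, hsep, hmet, π, hπ, hπs, hπi⟩ :=
    @exists_separable_metrizable_quotient G _ (⨅ A ∈ Γ, 𝓟 A).translationTopology
      hF.continuousMul h.regularSpace h.secondCountableTopology
  refine ⟨H, gH, tH, hmul, hsep, hmet, π, continuous_le_dom h.le_translationTopology hπ, hπs,
    fun x y hxy A hA => ?_⟩
  have hA' : A ∈ @nhds G (⨅ A ∈ Γ, 𝓟 A).translationTopology 1 := by
    rw [hF.nhds_one]
    exact h.hasBasis.mem_of_mem hA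
  exact @Inseparable.inv_mul_mem_of_mem_nhds_one G _ (⨅ A ∈ Γ, 𝓟 A).translationTopology
    hF.continuousMul x y (hπi x y hxy) A hA'

end IsNarrowBase

end NarrowBase

theorem exists_isNarrowBase {G : Type*} [Group G] [TopologicalSpace G] [ContinuousMul G]
    [RegularSpace G]
    (hnarrow : ∀ U ∈ 𝓝 (1 : G), ∃ E : Set G, E.Countable ∧ E * (U ∩ U⁻¹) = univ ∧
      (U ∩ U⁻¹) * E = univ)
    {S : Set (Set G)} (hS : S.Countable) (hSn : ∀ A ∈ S, A ∈ 𝓝 (1 : G)) :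
    ∃ Γ D, IsNarrowBase Γ D ∧ S ⊆ Γ := by
  choose! sh hsh using fun A (hA : A ∈ 𝓝 (1 : G)) =>
    exists_mem_nhds_one_mul_subset_closure_subset hA
  choose! cov hcov using hnarrow
  let conj (A : Set G) (d : G) : Set G := (fun x => d * x * d⁻¹) ⁻¹' A
  let sep (A : Set G) (d : G) : Set G := (d * ·) ⁻¹' (closure (A * A))ᶜ
  -- one round of closing off; `D` will be the union of the sets `cov B`
  let r (A B : Set G) : Set (Set G) :=
    {sh A, A ∩ B} ∪ conj A '' cov B ∪ sep A '' {d ∈ cov B | d ∉ closure (A * A)}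
  obtain ⟨Γ, hSΓ, hΓn, hΓc, hΓr⟩ := Set.exists_countable_superset_forall_subset (hS.insert univ)
    (P := {A | A ∈ 𝓝 (1 : G)}) (insert_subset univ_mem hSn) r
    (fun A _ B hB => (((countable_singleton _).insert _).union ((hcov B hB).1.image _)).union
      (((hcov B hB).1.mono (sep_subset _ _)).image _))
    (fun A hA B hB => by
      rintro C (((rfl | rfl) | ⟨d, -, rfl⟩) | ⟨d, ⟨-, hd⟩, rfl⟩)
      · exact (hsh A hA).1
      · exact inter_mem hA hB
      · exact ((continuous_const_mul d).mul continuous_const).continuousAt.preimage_mem_nhds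
          (by simpa using hA)
      · exact (isClosed_closure.isOpen_compl.preimage (continuous_const_mul d)).mem_nhds
          (by simpa using hd))
  have hD {d : G} (hd : d ∈ ⋃ B ∈ Γ, cov B) : ∃ B ∈ Γ, d ∈ cov B := by simpa using hd
  refine ⟨Γ, ⋃ B ∈ Γ, cov B, ⟨hΓc, hΓc.biUnion fun B hB => (hcov B (hΓn hB)).1,
    ⟨univ, hSΓ (mem_insert _ _)⟩, hΓn, fun A hA B hB => hΓr A hA B hB (by simp [r]),
    fun A hA => ⟨sh A, hΓr A hA A hA (by simp [r]), (hsh A (hΓn hA)).2.1⟩,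
    fun A hA => ⟨sh A, hΓr A hA A hA (by simp [r]), (hsh A (hΓn hA)).2.2⟩,
    fun A hA d hd => ?_, fun A hA d hd hdA => ?_, fun A hA => ?_, fun A hA => ?_⟩,
    (subset_insert _ _).trans hSΓ⟩
  · obtain ⟨B, hB, hdB⟩ := hD hd
    exact ⟨conj A d, hΓr A hA B hB (Or.inl (Or.inr ⟨d, hdB, rfl⟩)), fun b hb => hb⟩
  · obtain ⟨B, hB, hdB⟩ := hD hd
    refine ⟨sep A d, hΓr A hA B hB (Or.inr ⟨d, ⟨hdB, hdA⟩, rfl⟩), disjoint_left.2 ?_⟩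
    rintro _ ⟨c, hc, rfl⟩ hcA
    exact hc (subset_closure hcA)
  · exact eq_univ_of_subset (mul_subset_mul_right (subset_biUnion_of_mem hA))
      (hcov A (hΓn hA)).2.1
  · exact eq_univ_of_subset (mul_subset_mul_left (subset_biUnion_of_mem hA))
      (hcov A (hΓn hA)).2.2

theorem mem_nhds_one_inf_conjTop_iff {G : Type*} [Group G] [τ : TopologicalSpace G]
    {U : Set G} :
    U ∈ @nhds G (τ ⊓ conjTop G τ) 1 ↔ ∃ V ∈ 𝓝 (1 : G), ∃ W ∈ 𝓝 (1 : G), V ∩ W⁻¹ ⊆ U := by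
  rw [nhds_inf, conjTop, nhds_induced, inv_one, mem_inf_iff_superset]
  constructor
  · rintro ⟨V, hV, W', hW', hVW⟩
    obtain ⟨W, hW, hWW'⟩ := mem_comap.1 hW'
    exact ⟨V, hV, W, hW, (inter_subset_inter_right V hWW').trans hVW⟩
  · rintro ⟨V, hV, W, hW, hVW⟩
    exact ⟨V, hV, W⁻¹, preimage_mem_comap hW, hVW⟩

theorem MonoidHom.exists_countable_nhds_one_of_continuous_inf_conjTop {G K : Type*} [Group G]
    [τ : TopologicalSpace G] [Group K] [TopologicalSpace K] [T1Space K] [FirstCountableTopology K]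
    (φ : G →* K) (hφ : Continuous[τ ⊓ conjTop G τ, _] φ) :
    ∃ S : Set (Set G), S.Countable ∧ (∀ A ∈ S, A ∈ 𝓝 (1 : G)) ∧
      ∀ p, (∀ A ∈ S, p ∈ A ∩ A⁻¹) → φ p = 1 := by
  obtain ⟨b, hb⟩ := (𝓝 (1 : K)).exists_antitone_basis
  have hVW (n : ℕ) : ∃ V ∈ 𝓝 (1 : G), ∃ W ∈ 𝓝 (1 : G), V ∩ W⁻¹ ⊆ φ ⁻¹' b n := by
    have hbn : b n ∈ 𝓝 (φ 1) := by rw [map_one]; exact hb.mem n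
    exact mem_nhds_one_inf_conjTop_iff.1
      (tendsto_def.1 (@Continuous.tendsto _ _ (τ ⊓ conjTop G τ) _ φ hφ 1) _ hbn)
  choose V hV W hW hVW using hVW
  refine ⟨Set.range V ∪ Set.range W, (countable_range V).union (countable_range W), ?_,
    fun p hp => ?_⟩
  · rintro _ (⟨n, rfl⟩ | ⟨n, rfl⟩)
    exacts [hV n, hW n]
  · have hpb (n : ℕ) : φ p ∈ b n :=
      hVW n ⟨(hp _ (Or.inl ⟨n, rfl⟩)).1, (hp _ (Or.inr ⟨n, rfl⟩)).2⟩
    exact (specializes_iff_pure.2 (hb.toHasBasis.ge_iff.2 fun n _ => hpb n)).eq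

theorem statement19_general (G : Type*) [gG : Group G] [τ : TopologicalSpace G] [ContinuousMul G]
    [RegularSpace G]
    (hNar : @OmegaNarrow G gG (τ ⊓ conjTop G τ))
    (hS : @SimplySMFactorizable G gG (τ ⊓ conjTop G τ)) :
    SimplySMFactorizablePara G ∧ OmegaNarrow G := by
  refine ⟨fun U ⟨f, hf, hfU⟩ => ?_, fun U hU => hNar U (nhds_mono inf_le_left hU)⟩
  obtain ⟨K, _, _, -, -, _, φ, hφ, -, hφU⟩ := hS U ⟨f, continuous_le_dom inf_le_left hf, hfU⟩
  obtain ⟨S, hSc, hSn, hSφ⟩ := φ.exists_countable_nhds_one_of_continuous_inf_conjTop hφ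
  obtain ⟨Γ, D, hΓ, hSΓ⟩ := exists_isNarrowBase
    (fun V hV => hNar _ (mem_nhds_one_inf_conjTop_iff.2 ⟨V, hV, V, hV, subset_rfl⟩)) hSc hSn
  obtain ⟨H, gH, tH, hH, hsep, hmet, π, hπ, hπs, hπΓ⟩ := hΓ.exists_quotient
  refine ⟨H, gH, tH, hH, hsep, hmet, π, hπ, hπs,
    Set.preimage_image_eq_of_factors hφU fun x y hxy => ?_⟩
  have hp : φ (x⁻¹ * y) = 1 := hSφ _ fun A hA =>
    ⟨hπΓ x y hxy A (hSΓ hA), by simpa using hπΓ y x hxy.symm A (hSΓ hA)⟩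
  rwa [map_mul, map_inv, inv_mul_eq_one] at hp

/-- If the topological group associated to a regular paratopological group G is ω-narrow and
simply sm-factorizable, then G itself is simply sm-factorizable and ω-narrow. -/
theorem statement19 (G : Type*) [gG : Group G] [τ : TopologicalSpace G] [ContinuousMul G]
    [T1Space G] [RegularSpace G]
    (hNar : @OmegaNarrow G gG (τ ⊓ conjTop G τ))
    (hS : @SimplySMFactorizable G gG (τ ⊓ conjTop G τ)) :
    SimplySMFactorizablePara G ∧ OmegaNarrow G :=
  statement19_general G (gG := gG) (τ := τ) hNar hS
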